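/- If i ≤ V(i) for every i ∈ {1,…,C}, then the full set S = {1,…,C} admits a feasible assignment; that is, every chunk can be downloaded entirely over a single chosen link before its deadline while respecting all per-slot bandwidths and per-link maximum contributions. -/
import Mathlib


/-- Cumulative bandwidth of a link up to time `t`: `R(t) = Σ_{j=1}^t B(j)`. -/
noncomputable def cumBW (B : ℕ → ℝ) (t : ℕ) : ℝ := ∑ j ∈ Finset.Icc 1 t, B j

/-- `V(i) = Σ_{u=1}^U ⌊min(η_u, R_u(d(i)))/Y⌋`. -/
noncomputable def Vval (U : ℕ) (Y : ℝ) (d : ℕ → ℕ) (B : Fin U → ℕ → ℝ)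
    (η : Fin U → ℝ) (i : ℕ) : ℕ :=
  ∑ u : Fin U, ⌊min (η u) (cumBW (B u) (d i)) / Y⌋₊

/-- A feasible assignment for a set `S` of chunks: a link choice `ℓ i` and download
amounts `z i j ≥ 0` so that each chunk `i ∈ S` gets its full layer of size `Y` over
link `ℓ i` by its deadline `d i`, respecting per-slot bandwidths and per-link
maximum contributions. -/
def FeasibleAssignment (U : ℕ) (Y : ℝ) (d : ℕ → ℕ) (B : Fin U → ℕ → ℝ)
    (η : Fin U → ℝ) (S : Finset ℕ) : Prop :=
  ∃ (ℓ : ℕ → Fin U) (z : ℕ → ℕ → ℝ),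
    (∀ i ∈ S, ∀ j, 0 ≤ z i j) ∧
    (∀ i ∈ S, ∑ j ∈ Finset.Icc 1 (d i), z i j = Y) ∧
    (∀ i ∈ S, ∀ j, (j < 1 ∨ d i < j) → z i j = 0) ∧
    (∀ u : Fin U, ∀ j, 1 ≤ j →
      ∑ i ∈ S.filter (fun i => ℓ i = u), z i j ≤ B u j) ∧
    (∀ u : Fin U,
      ∑ i ∈ S.filter (fun i => ℓ i = u), ∑ j ∈ Finset.Icc 1 (d i), z i j ≤ η u)

section Aux
variable (U : ℕ) (Y : ℝ) (d : ℕ → ℕ) (B : Fin U → ℕ → ℝ) (η : Fin U → ℝ) (hU : 0 < U)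

noncomputable def nfun (u : Fin U) (i : ℕ) : ℕ :=
  ⌊min (η u) (cumBW (B u) (d i)) / Y⌋₊

noncomputable def pick (c : Fin U → ℕ) (i : ℕ) : Fin U :=
  if h : ∃ u, c u < nfun U Y d B η u i then h.choose else ⟨0, hU⟩

noncomputable def cnt : ℕ → Fin U → ℕ
  | 0 => fun _ => 0
  | (i+1) => fun u =>
      cnt i u + if pick U Y d B η hU (cnt i) (i+1) = u then 1 else 0

noncomputable def lnk (i : ℕ) : Fin U :=
  pick U Y d B η hU (cnt U Y d B η hU (i-1)) i

noncomputable def rnk (i : ℕ) : ℕ :=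
  cnt U Y d B η hU (i-1) (lnk U Y d B η hU i)

noncomputable def Ffun (u : Fin U) (j : ℕ) (x : ℝ) : ℝ :=
  min (cumBW (B u) j) (max (cumBW (B u) (j-1)) x)

noncomputable def zfun (i j : ℕ) : ℝ :=
  if 1 ≤ j ∧ j ≤ d i then
    Ffun U B (lnk U Y d B η hU i) j ((rnk U Y d B η hU i + 1 : ℕ) * Y)
      - Ffun U B (lnk U Y d B η hU i) j ((rnk U Y d B η hU i : ℕ) * Y)
  else 0

lemma cnt_succ (i : ℕ) (u : Fin U) :
    cnt U Y d B η hU (i+1) u =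
      cnt U Y d B η hU i u + if lnk U Y d B η hU (i+1) = u then 1 else 0 := rfl

lemma sum_cnt (i : ℕ) : ∑ u : Fin U, cnt U Y d B η hU i u = i := by
  induction i with
  | zero => simp [cnt]
  | succ i ih =>
      simp only [cnt_succ, Finset.sum_add_distrib, ih, Finset.sum_ite_eq, Finset.sum_ite_eq',
        Finset.mem_univ, if_true]

lemma cnt_mono (u : Fin U) : Monotone (fun i => cnt U Y d B η hU i u) := by
  apply monotone_nat_of_le_succ
  intro i
  simp only [cnt_succ]
  omega

lemma cnt_le (i : ℕ) (u : Fin U) : cnt U Y d B η hU i u ≤ i := by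
  calc cnt U Y d B η hU i u ≤ ∑ v : Fin U, cnt U Y d B η hU i v :=
        Finset.single_le_sum (fun v _ => Nat.zero_le _) (Finset.mem_univ u)
    _ = i := sum_cnt U Y d B η hU i

lemma pick_spec {c : Fin U → ℕ} {i : ℕ} (hex : ∃ u, c u < nfun U Y d B η u i) :
    c (pick U Y d B η hU c i) < nfun U Y d B η (pick U Y d B η hU c i) i := by
  rw [pick, dif_pos hex]
  exact hex.choose_spec

lemma cnt_lnk (i : ℕ) (hi : 1 ≤ i) :
    cnt U Y d B η hU i (lnk U Y d B η hU i) = rnk U Y d B η hU i + 1 := by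
  obtain ⟨k, rfl⟩ : ∃ k, i = k + 1 := ⟨i - 1, by omega⟩
  rw [rnk, cnt_succ, if_pos rfl]
  simp

lemma Ffun_mono (u : Fin U) (j : ℕ) : Monotone (Ffun U B u j) := by
  intro x y hxy
  exact min_le_min le_rfl (max_le_max le_rfl hxy)

end Aux

lemma cumBW_nonneg {B : ℕ → ℝ} (hB : ∀ j, 1 ≤ j → 0 ≤ B j) (t : ℕ) :
    0 ≤ cumBW B t :=
  Finset.sum_nonneg fun j hj => hB j (Finset.mem_Icc.mp hj).1

lemma cumBW_mono {B : ℕ → ℝ} (hB : ∀ j, 1 ≤ j → 0 ≤ B j) : Monotone (cumBW B) := by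
  intro s t hst
  apply Finset.sum_le_sum_of_subset_of_nonneg
  · exact Finset.Icc_subset_Icc le_rfl hst
  · intro j hj _; exact hB j (Finset.mem_Icc.mp hj).1

lemma cumBW_zero (B : ℕ → ℝ) : cumBW B 0 = 0 := by simp [cumBW]

lemma cumBW_succ (B : ℕ → ℝ) (j : ℕ) (hj : 1 ≤ j) :
    cumBW B j = cumBW B (j-1) + B j := by
  obtain ⟨k, rfl⟩ : ∃ k, j = k + 1 := ⟨j - 1, by omega⟩
  simp only [cumBW, Nat.add_sub_cancel]
  exact Finset.sum_Icc_succ_top (by omega) B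

lemma clampsum_Icc (R : ℕ → ℝ) (hmono : Monotone R) (hR0 : R 0 = 0) {x : ℝ} (hx : 0 ≤ x)
    (T : ℕ) :
    ∑ j ∈ Finset.Icc 1 T, (min (R j) (max (R (j-1)) x) - R (j-1)) = min x (R T) := by
  induction T with
  | zero => simp [hR0, min_eq_right hx]
  | succ T ih =>
      rw [Finset.sum_Icc_succ_top (by omega : 1 ≤ T + 1), ih]
      simp only [Nat.add_sub_cancel]
      rcases le_total x (R T) with hle | hle
      · rw [max_eq_left hle, min_eq_right (hmono (Nat.le_succ T)),
          min_eq_left hle, min_eq_left (hle.trans (hmono (Nat.le_succ T)))]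
        ring
      · rw [max_eq_right hle, min_eq_right hle, min_comm]
        ring

section Aux2
variable (U : ℕ) (Y : ℝ) (d : ℕ → ℕ) (B : Fin U → ℕ → ℝ) (η : Fin U → ℝ) (hU : 0 < U)

lemma cnt_eq_card (i : ℕ) (u : Fin U) :
    cnt U Y d B η hU i u
      = ((Finset.Icc 1 i).filter (fun k => lnk U Y d B η hU k = u)).card := by
  induction i with
  | zero => simp [cnt]
  | succ i ih =>
      rw [cnt_succ, ih]
      have hins : Finset.Icc 1 (i+1) = insert (i+1) (Finset.Icc 1 i) := by
        ext k; simp [Finset.mem_Icc]; omega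
      rw [hins, Finset.filter_insert]
      split
      · rw [Finset.card_insert_of_notMem (by simp [Finset.mem_filter, Finset.mem_Icc])]
      · simp
end Aux2


/-- If `i ≤ V(i)` for every `i ∈ {1,…,C}`, then the full set `{1,…,C}` admits a
feasible assignment. -/
theorem full_set_feasible_of_le_V
    (C U : ℕ) (hU : 1 ≤ U) (Y : ℝ) (hY : 0 < Y)
    (d : ℕ → ℕ) (hd : Monotone d)
    (B : Fin U → ℕ → ℝ) (hB : ∀ u j, 1 ≤ j → 0 ≤ B u j)
    (η : Fin U → ℝ) (hη : ∀ u, 0 ≤ η u)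
    (h : ∀ i ∈ Finset.Icc 1 C, i ≤ Vval U Y d B η i) :
    FeasibleAssignment U Y d B η (Finset.Icc 1 C) := by
  have hU0 : 0 < U := hU
  have hRnn : ∀ (u : Fin U) (t : ℕ), 0 ≤ cumBW (B u) t :=
    fun u t => cumBW_nonneg (fun j hj => hB u j hj) t
  have hRmono : ∀ u : Fin U, Monotone (cumBW (B u)) :=
    fun u => cumBW_mono (fun j hj => hB u j hj)
  -- the greedy pick always succeeds for chunks in range
  have hex : ∀ i, 1 ≤ i → i ≤ C →
      rnk U Y d B η hU0 i < nfun U Y d B η (lnk U Y d B η hU0 i) i := by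
    intro i h1 h2
    have hiv := h i (Finset.mem_Icc.mpr ⟨h1, h2⟩)
    have hexists : ∃ u, cnt U Y d B η hU0 (i-1) u < nfun U Y d B η u i := by
      by_contra hc
      push_neg at hc
      have hle : Vval U Y d B η i ≤ i - 1 := by
        have hV : Vval U Y d B η i = ∑ u : Fin U, nfun U Y d B η u i := rfl
        rw [hV, ← sum_cnt U Y d B η hU0 (i-1)]
        exact Finset.sum_le_sum fun u _ => hc u
      omega
    exact pick_spec U Y d B η hU0 hexists
  -- the real-valued rank bound
  have hrank : ∀ i, 1 ≤ i → i ≤ C →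
      ((rnk U Y d B η hU0 i + 1 : ℕ) : ℝ) * Y ≤
        min (η (lnk U Y d B η hU0 i)) (cumBW (B (lnk U Y d B η hU0 i)) (d i)) := by
    intro i h1 h2
    have hx : rnk U Y d B η hU0 i + 1 ≤ nfun U Y d B η (lnk U Y d B η hU0 i) i :=
      hex i h1 h2
    set m : ℝ := min (η (lnk U Y d B η hU0 i)) (cumBW (B (lnk U Y d B η hU0 i)) (d i))
      with hmdef
    have hm0 : 0 ≤ m := le_min (hη _) (hRnn _ _)
    have hx' : ((rnk U Y d B η hU0 i + 1 : ℕ) : ℝ) ≤ (⌊m / Y⌋₊ : ℝ) := by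
      exact_mod_cast hx
    calc ((rnk U Y d B η hU0 i + 1 : ℕ) : ℝ) * Y ≤ (⌊m / Y⌋₊ : ℝ) * Y :=
          mul_le_mul_of_nonneg_right hx' hY.le
      _ ≤ (m / Y) * Y :=
          mul_le_mul_of_nonneg_right (Nat.floor_le (div_nonneg hm0 hY.le)) hY.le
      _ = m := div_mul_cancel₀ m hY.ne'
  -- per-chunk totals
  have hchunk : ∀ i ∈ Finset.Icc 1 C,
      ∑ j ∈ Finset.Icc 1 (d i), zfun U Y d B η hU0 i j = Y := by
    intro i hi
    obtain ⟨h1, h2⟩ := Finset.mem_Icc.mp hi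
    set u := lnk U Y d B η hU0 i with hu
    set q := rnk U Y d B η hU0 i with hq
    have hsum : ∑ j ∈ Finset.Icc 1 (d i), zfun U Y d B η hU0 i j
        = ∑ j ∈ Finset.Icc 1 (d i),
            ((min (cumBW (B u) j) (max (cumBW (B u) (j-1)) (((q+1 : ℕ) : ℝ) * Y))
                - cumBW (B u) (j-1))
             - (min (cumBW (B u) j) (max (cumBW (B u) (j-1)) (((q : ℕ) : ℝ) * Y))
                - cumBW (B u) (j-1))) := by
      apply Finset.sum_congr rfl
      intro j hj
      obtain ⟨hj1, hj2⟩ := Finset.mem_Icc.mp hj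
      rw [zfun, if_pos ⟨hj1, hj2⟩, Ffun, Ffun]
      ring
    have hb0 : (0:ℝ) ≤ ((q+1 : ℕ) : ℝ) * Y := by positivity
    have ha0 : (0:ℝ) ≤ ((q : ℕ) : ℝ) * Y := by positivity
    rw [hsum, Finset.sum_sub_distrib,
      clampsum_Icc (cumBW (B u)) (hRmono u) (cumBW_zero _) hb0 (d i),
      clampsum_Icc (cumBW (B u)) (hRmono u) (cumBW_zero _) ha0 (d i)]
    have hbR : ((q+1 : ℕ) : ℝ) * Y ≤ cumBW (B u) (d i) :=
      (hrank i h1 h2).trans (min_le_right _ _)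
    have haR : ((q : ℕ) : ℝ) * Y ≤ cumBW (B u) (d i) := by
      refine le_trans ?_ hbR
      have : ((q : ℕ) : ℝ) ≤ ((q+1 : ℕ) : ℝ) := by exact_mod_cast Nat.le_succ q
      exact mul_le_mul_of_nonneg_right this hY.le
    rw [min_eq_left hbR, min_eq_left haR]
    push_cast
    ring
  refine ⟨lnk U Y d B η hU0, zfun U Y d B η hU0, ?_, hchunk, ?_, ?_, ?_⟩
  · -- nonneg
    intro i _ j
    rw [zfun]
    split
    · exact sub_nonneg.mpr (Ffun_mono U B _ j
        (mul_le_mul_of_nonneg_right (by exact_mod_cast Nat.le_succ _) hY.le))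
    · exact le_rfl
  · -- zero outside window
    intro i _ j hj
    rw [zfun, if_neg (by omega)]
  · -- per-slot bandwidth
    intro u j hj
    set T := (Finset.Icc 1 C).filter (fun i => lnk U Y d B η hU0 i = u) with hT
    have hmem : ∀ i ∈ T, 1 ≤ i ∧ i ≤ C ∧ lnk U Y d B η hU0 i = u := by
      intro i hi
      obtain ⟨hi1, hi2⟩ := Finset.mem_filter.mp hi
      obtain ⟨ha, hb⟩ := Finset.mem_Icc.mp hi1
      exact ⟨ha, hb, hi2⟩
    set f : ℕ → ℝ := fun q => Ffun U B u j ((q : ℝ) * Y) with hf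
    have hfmono : Monotone f := by
      intro a b hab
      exact Ffun_mono U B u j (mul_le_mul_of_nonneg_right (by exact_mod_cast hab) hY.le)
    have h1 : ∑ i ∈ T, zfun U Y d B η hU0 i j
        ≤ ∑ i ∈ T, (f (rnk U Y d B η hU0 i + 1) - f (rnk U Y d B η hU0 i)) := by
      apply Finset.sum_le_sum
      intro i hi
      obtain ⟨hi1, hiC, hiu⟩ := hmem i hi
      rw [zfun, hiu]
      have hcast : ∀ q : ℕ, ((q : ℕ) : ℝ) * Y = (q : ℝ) * Y := fun q => rfl
      split
      · apply le_of_eq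
        simp only [hf]
      · exact sub_nonneg.mpr (hfmono (Nat.le_succ _))
    have hkey : ∀ a ∈ T, ∀ b ∈ T, a < b →
        rnk U Y d B η hU0 a < rnk U Y d B η hU0 b := by
      intro a ha b hb hab
      obtain ⟨ha1, haC, hau⟩ := hmem a ha
      obtain ⟨hb1, hbC, hbu⟩ := hmem b hb
      have e1 : cnt U Y d B η hU0 a u = rnk U Y d B η hU0 a + 1 := by
        rw [← hau]; exact cnt_lnk U Y d B η hU0 a ha1
      have e2 : rnk U Y d B η hU0 b = cnt U Y d B η hU0 (b-1) u := by
        rw [rnk, hbu]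
      have e3 : cnt U Y d B η hU0 a u ≤ cnt U Y d B η hU0 (b-1) u :=
        cnt_mono U Y d B η hU0 u (by omega)
      omega
    have hinj : Set.InjOn (fun i => rnk U Y d B η hU0 i) T := by
      intro a ha b hb hab
      by_contra hne
      rcases Nat.lt_or_ge a b with hlt | hge
      · exact absurd hab (Nat.ne_of_lt (hkey a ha b hb hlt))
      · have hlt : b < a := by omega
        exact absurd hab.symm (Nat.ne_of_lt (hkey b hb a ha hlt))
    have h2 : ∑ i ∈ T, (f (rnk U Y d B η hU0 i + 1) - f (rnk U Y d B η hU0 i))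
        = ∑ q ∈ T.image (fun i => rnk U Y d B η hU0 i), (f (q+1) - f q) :=
      (Finset.sum_image (f := fun q => f (q+1) - f q)
        (fun a ha b hb hab => hinj ha hb hab)).symm
    have hsub : T.image (fun i => rnk U Y d B η hU0 i) ⊆ Finset.range C := by
      intro q hq
      obtain ⟨i, hiT, rfl⟩ := Finset.mem_image.mp hq
      obtain ⟨hi1, hiC, _⟩ := hmem i hiT
      have := cnt_le U Y d B η hU0 (i-1) (lnk U Y d B η hU0 i)
      rw [Finset.mem_range, rnk]
      omega
    have h3 : ∑ q ∈ T.image (fun i => rnk U Y d B η hU0 i), (f (q+1) - f q)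
        ≤ ∑ q ∈ Finset.range C, (f (q+1) - f q) :=
      Finset.sum_le_sum_of_subset_of_nonneg hsub
        (fun q _ _ => sub_nonneg.mpr (hfmono (Nat.le_succ q)))
    have h4 : ∑ q ∈ Finset.range C, (f (q+1) - f q) = f C - f 0 :=
      Finset.sum_range_sub f C
    have hf0 : f 0 = cumBW (B u) (j-1) := by
      simp only [hf, Ffun, Nat.cast_zero, zero_mul]
      rw [max_eq_left (hRnn u (j-1)), min_eq_right (hRmono u (by omega : j - 1 ≤ j))]
    have hfC : f C ≤ cumBW (B u) j := min_le_left _ _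
    have hBj : cumBW (B u) j = cumBW (B u) (j-1) + B u j := cumBW_succ (B u) j hj
    calc ∑ i ∈ T, zfun U Y d B η hU0 i j
        ≤ f C - f 0 := by rw [← h4]; exact h1.trans (h2 ▸ h3)
      _ ≤ B u j := by rw [hf0]; linarith
  · -- per-link totals
    intro u
    have hcntfloor : ∀ i, i ≤ C → ∀ v : Fin U,
        cnt U Y d B η hU0 i v ≤ ⌊η v / Y⌋₊ := by
      intro i
      induction i with
      | zero => intro _ v; simp [cnt]
      | succ i ih =>
          intro hiC v
          rw [cnt_succ]
          split
          · next hlv =>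
              have hx := hex (i+1) (by omega) hiC
              have hr : rnk U Y d B η hU0 (i+1) = cnt U Y d B η hU0 i v := by
                rw [rnk, hlv]; simp
              have hn : nfun U Y d B η v (i+1) ≤ ⌊η v / Y⌋₊ :=
                Nat.floor_le_floor
                  ((div_le_div_iff_of_pos_right hY).mpr (min_le_left _ _))
              rw [hlv, hr] at hx
              omega
          · next => simpa using ih (by omega) v
    have hcard : ((Finset.Icc 1 C).filter
        (fun i => lnk U Y d B η hU0 i = u)).card = cnt U Y d B η hU0 C u :=
      (cnt_eq_card U Y d B η hU0 C u).symm
    have hsum : ∑ i ∈ (Finset.Icc 1 C).filter (fun i => lnk U Y d B η hU0 i = u),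
        ∑ j ∈ Finset.Icc 1 (d i), zfun U Y d B η hU0 i j
        = (cnt U Y d B η hU0 C u : ℝ) * Y := by
      rw [Finset.sum_congr rfl (fun i hi => hchunk i (Finset.mem_filter.mp hi).1),
        Finset.sum_const, ← hcard, nsmul_eq_mul]
    rw [hsum]
    have hfl : (cnt U Y d B η hU0 C u : ℝ) ≤ (⌊η u / Y⌋₊ : ℝ) := by
      exact_mod_cast hcntfloor C le_rfl u
    calc (cnt U Y d B η hU0 C u : ℝ) * Y ≤ (⌊η u / Y⌋₊ : ℝ) * Y :=
          mul_le_mul_of_nonneg_right hfl hY.le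
      _ ≤ (η u / Y) * Y :=
          mul_le_mul_of_nonneg_right (Nat.floor_le (div_nonneg (hη u) hY.le)) hY.le
      _ = η u := div_mul_cancel₀ _ hY.ne'
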